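/- Let α, ν ≥ 0 be reals and B ⊆ S with |B| ≤ νn. Suppose j ≠ i, n_{C_j} > 6(α+ν)n, and t is an integer with 6(α+ν)n < t ≤ n_{C_i} (and t ≤ n). If x is a good point of C_i and y is a good point of C_j, then |N_t(x) ∩ N_t(y)| < t − 4(α+ν)n; in particular, x and y share fewer than t − 2(α+ν)n points among their t nearest neighbors. -/

import Mathlib

open Finset

/-- The `t` nearest neighbors of `x` in the whole point set:
all points whose rank (w.r.t. decreasing similarity to `x`) is below `t`. -/
def nearest {V : Type*} [Fintype V] [DecidableEq V] (r : V → V → ℕ) (x : V) (t : ℕ) :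
    Finset V :=
  Finset.univ.filter fun y => r x y < t

/-- The `s` nearest neighbors of `x` within a subset `T`:
the elements `y ∈ T` such that at most `s` elements of `T` have rank at most that of `y`. -/
def nearestIn {V : Type*} [Fintype V] [DecidableEq V] (r : V → V → ℕ) (x : V)
    (T : Finset V) (s : ℕ) : Finset V :=
  T.filter fun y => (T.filter fun z => r x z ≤ r x y).card ≤ s


/-- In the weak good neighborhood setting, `x` is a good point of the cluster `Ci`
(w.r.t. the bad set `B`): `x ∈ Ci \ B` and at most `α·n` of its `|Ci \ B|` nearest
neighbors within `S \ B` lie outside `Ci \ B`. -/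
def IsGoodPoint {V : Type*} [Fintype V] [DecidableEq V] (r : V → V → ℕ)
    (α : ℝ) (B Ci : Finset V) (x : V) : Prop :=
  x ∈ Ci \ B ∧
    (((nearestIn r x (Finset.univ \ B) ((Ci \ B).card)) \ (Ci \ B)).card : ℝ)
      ≤ α * (Fintype.card V)

/-!
At most `αn` of the `|C \ B|` nearest neighbours within `S \ B` of a good point of `C` lie outside
`C`. Its (at least `t - |B|`) `t` nearest neighbours within `S \ B` form an initial segment of the
same order, so at least `min(t, |C|) - |B| - αn` of its `t` nearest neighbours lie in `C`. For `x`
this leaves at most `|B| + αn` points of `N_t(x)` outside `C_i`, and for `y` at most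
`t - min(t, |C_j|) + |B| + αn` points of `N_t(y)` inside `C_i`; every common neighbour is of one
of these two kinds, and `min(t, |C_j|) > 6(α + ν)n`.
-/
section NearestIn

variable {V : Type*} (r : V → V → ℕ) (x : V) (T : Finset V)

/-- The position of `z` when `T` is listed by increasing `r x`, counted from `1`. -/
def rankIn (z : V) : ℕ := #{w ∈ T | r x w ≤ r x z}

lemma rankIn_lt_rankIn {z w : V} (hw : w ∈ T) (h : r x z < r x w) :
    rankIn r x T z < rankIn r x T w := by
  refine Finset.card_lt_card ⟨Finset.monotone_filter_right _ fun _ _ hu => hu.trans h.le, ?_⟩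
  intro hsub
  have := (Finset.mem_filter.mp (hsub (Finset.mem_filter.mpr ⟨hw, le_rfl⟩))).2
  omega

lemma rankIn_injOn (hinj : Function.Injective (r x)) : Set.InjOn (rankIn r x T) T := by
  intro z hz w hw h
  by_contra hne
  rcases (hinj.ne hne).lt_or_gt with hlt | hlt
  · exact (rankIn_lt_rankIn r x T hw hlt).ne h
  · exact (rankIn_lt_rankIn r x T hz hlt).ne' h

lemma image_rankIn (hinj : Function.Injective (r x)) :
    T.image (rankIn r x T) = Icc 1 #T := by
  refine Finset.eq_of_subset_of_card_le (fun v hv => ?_) ?_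
  · obtain ⟨z, hz, rfl⟩ := Finset.mem_image.mp hv
    exact Finset.mem_Icc.mpr ⟨Finset.card_pos.mpr ⟨z, Finset.mem_filter.mpr ⟨hz, le_rfl⟩⟩,
      Finset.card_le_card (Finset.filter_subset _ _)⟩
  · rw [Finset.card_image_of_injOn (rankIn_injOn r x T hinj), Nat.card_Icc, Nat.add_sub_cancel]

variable [Fintype V] [DecidableEq V]

lemma nearestIn_mono : Monotone (nearestIn r x T) :=
  fun _ _ hst => Finset.monotone_filter_right _ fun _ _ h => h.trans hst

lemma card_nearestIn (hinj : Function.Injective (r x)) (s : ℕ) :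
    #(nearestIn r x T s) = min s #T := by
  have hfilter : (Icc 1 #T).filter (· ≤ s) = Icc 1 (min s #T) := by
    ext v
    simp only [Finset.mem_filter, Finset.mem_Icc]
    omega
  calc #(nearestIn r x T s)
      = #((nearestIn r x T s).image (rankIn r x T)) :=
        (Finset.card_image_of_injOn
          ((rankIn_injOn r x T hinj).mono (Finset.filter_subset _ _))).symm
    _ = #((T.image (rankIn r x T)).filter (· ≤ s)) := by rw [Finset.filter_image]; rfl
    _ = min s #T := by rw [image_rankIn r x T hinj, hfilter, Nat.card_Icc, Nat.add_sub_cancel]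

lemma nearestIn_card_nearest_inter_subset (t : ℕ) :
    nearestIn r x T #(nearest r x t ∩ T) ⊆ nearest r x t := by
  intro z hz
  obtain ⟨hzT, hzrank⟩ := Finset.mem_filter.mp hz
  by_contra hzt
  have hzt' : t ≤ r x z := by simpa [nearest] using hzt
  have hsub : insert z (nearest r x t ∩ T) ⊆ {w ∈ T | r x w ≤ r x z} := by
    intro w hw
    rcases Finset.mem_insert.mp hw with rfl | hw
    · exact Finset.mem_filter.mpr ⟨hzT, le_rfl⟩
    · obtain ⟨hwN, hwT⟩ := Finset.mem_inter.mp hw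
      exact Finset.mem_filter.mpr ⟨hwT, ((Finset.mem_filter.mp hwN).2.trans_le hzt').le⟩
  have := Finset.card_le_card hsub
  rw [Finset.card_insert_of_notMem fun h => hzt (Finset.mem_inter.mp h).1] at this
  omega

lemma card_nearest (hinj : Function.Injective (r x)) (hlt : ∀ y, r x y < Fintype.card V)
    {t : ℕ} (ht : t ≤ Fintype.card V) : #(nearest r x t) = t := by
  have himage : univ.image (r x) = range (Fintype.card V) :=
    Finset.eq_of_subset_of_card_le (fun v hv => by
      obtain ⟨w, -, rfl⟩ := Finset.mem_image.mp hv
      exact Finset.mem_range.mpr (hlt w))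
      (by rw [Finset.card_image_of_injective _ hinj, Finset.card_range, Finset.card_univ])
  have hfilter : (range (Fintype.card V)).filter (· < t) = range t := by
    ext v
    simp only [Finset.mem_filter, Finset.mem_range]
    omega
  calc #(nearest r x t)
      = #((nearest r x t).image (r x)) := (Finset.card_image_of_injective _ hinj).symm
    _ = #((univ.image (r x)).filter (· < t)) := by rw [Finset.filter_image]; rfl
    _ = t := by rw [himage, hfilter, Finset.card_range]

/-- Both `nearest r x t ∩ T` and `nearestIn r x T #D` are initial segments of `T` ordered by
`r x`, so they share the initial segment of length `min #(nearest r x t ∩ T) #D`. -/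
lemma min_card_le_card_nearest_inter_add (hinj : Function.Injective (r x)) {D : Finset V}
    (hDT : D ⊆ T) (t : ℕ) :
    min #(nearest r x t ∩ T) #D ≤ #(nearest r x t ∩ D) + #(nearestIn r x T #D \ D) := by
  set q := min #(nearest r x t ∩ T) #D
  have hcard : #(nearestIn r x T q) = q := by
    rw [card_nearestIn r x T hinj]
    exact min_eq_left ((min_le_right _ _).trans (Finset.card_le_card hDT))
  have hsub : nearestIn r x T q ⊆ (nearest r x t ∩ D) ∪ (nearestIn r x T #D \ D) := by
    intro z hz
    by_cases hzD : z ∈ D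
    · exact Finset.mem_union_left _ (Finset.mem_inter.mpr
        ⟨nearestIn_card_nearest_inter_subset r x T t (nearestIn_mono r x T (min_le_left _ _) hz),
          hzD⟩)
    · exact Finset.mem_union_right _
        (Finset.mem_sdiff.mpr ⟨nearestIn_mono r x T (min_le_right _ _) hz, hzD⟩)
  calc q = #(nearestIn r x T q) := hcard.symm
    _ ≤ _ := (Finset.card_le_card hsub).trans (Finset.card_union_le _ _)

end NearestIn

lemma card_inter_add_card_inter_add_card_inter_le {V : Type*} [DecidableEq V]
    {X Y P Q : Finset V} (hPQ : Disjoint P Q) :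
    #(X ∩ Y) + #(X ∩ P) + #(Y ∩ Q) ≤ #X + #Y := by
  have hXY : #(X ∩ Y) ≤ #(X \ P) + #(Y ∩ P) := by
    refine (Finset.card_le_card fun z hz => ?_).trans (Finset.card_union_le _ _)
    obtain ⟨hzX, hzY⟩ := Finset.mem_inter.mp hz
    by_cases hzP : z ∈ P
    · exact Finset.mem_union_right _ (Finset.mem_inter.mpr ⟨hzY, hzP⟩)
    · exact Finset.mem_union_left _ (Finset.mem_sdiff.mpr ⟨hzX, hzP⟩)
  have hX := Finset.card_sdiff_add_card_inter X P
  have hY : #(Y ∩ P) + #(Y ∩ Q) ≤ #Y := by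
    rw [← Finset.card_union_of_disjoint
      (hPQ.mono Finset.inter_subset_right Finset.inter_subset_right)]
    exact Finset.card_le_card
      (Finset.union_subset Finset.inter_subset_left Finset.inter_subset_left)
  omega

lemma IsGoodPoint.min_le_card_nearest_inter {V : Type*} [Fintype V] [DecidableEq V]
    {r : V → V → ℕ} {α ν : ℝ} {B C : Finset V} {x : V} (hx : IsGoodPoint r α B C x)
    (hinj : Function.Injective (r x)) (hlt : ∀ y, r x y < Fintype.card V) {t : ℕ}
    (ht : t ≤ Fintype.card V) (hB : (#B : ℝ) ≤ ν * Fintype.card V) :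
    min (t : ℝ) #C ≤ #(nearest r x t ∩ C) + (α + ν) * Fintype.card V := by
  have hprefix := min_card_le_card_nearest_inter_add r x (univ \ B) hinj
    (Finset.sdiff_subset_sdiff (Finset.subset_univ C) le_rfl) t
  have hN : t - #B ≤ #(nearest r x t ∩ (univ \ B)) := by
    have := Finset.le_card_sdiff B (nearest r x t)
    rwa [card_nearest r x hinj hlt ht, ← Finset.univ_inter (nearest r x t \ B),
      ← inter_sdiff_left_comm] at this
  have hC : #C - #B ≤ #(C \ B) := Finset.le_card_sdiff B C
  have hD : #(nearest r x t ∩ (C \ B)) ≤ #(nearest r x t ∩ C) :=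
    Finset.card_le_card (Finset.inter_subset_inter_left Finset.sdiff_subset)
  have hcount : min t #C ≤ #(nearest r x t ∩ C) + #B
      + #(nearestIn r x (univ \ B) #(C \ B) \ (C \ B)) := by
    omega
  rw [← Nat.cast_le (α := ℝ)] at hcount
  push_cast at hcount
  linarith [hx.2]

theorem weak_good_points_different_clusters_few_common_neighbors_general
    {V : Type*} [Fintype V] [DecidableEq V] {k : ℕ}
    (r : V → V → ℕ) (C : Fin k → Finset V) (α ν : ℝ) (B : Finset V)
    (hα : 0 ≤ α) (hν : 0 ≤ ν)
    (hrinj : ∀ x : V, Function.Injective (r x))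
    (hrlt : ∀ x y : V, r x y < Fintype.card V)
    (hdis : ∀ i j : Fin k, i ≠ j → Disjoint (C i) (C j))
    (hB : (B.card : ℝ) ≤ ν * (Fintype.card V))
    (i j : Fin k) (hij : j ≠ i)
    (hCj : 6 * (α + ν) * (Fintype.card V) < ((C j).card : ℝ))
    (t : ℕ) (htlo : 6 * (α + ν) * (Fintype.card V) < (t : ℝ))
    (hthi : t ≤ (C i).card) (htn : t ≤ Fintype.card V)
    (x : V) (hx : IsGoodPoint r α B (C i) x)
    (y : V) (hy : IsGoodPoint r α B (C j) y) :
    (((nearest r x t) ∩ (nearest r y t)).card : ℝ)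
        < (t : ℝ) - 4 * (α + ν) * (Fintype.card V) ∧
    (((nearest r x t) ∩ (nearest r y t)).card : ℝ)
        < (t : ℝ) - 2 * (α + ν) * (Fintype.card V) := by
  have hcommon := card_inter_add_card_inter_add_card_inter_le
    (X := nearest r x t) (Y := nearest r y t) (hdis i j hij.symm)
  rw [card_nearest r x (hrinj x) (hrlt x) htn, card_nearest r y (hrinj y) (hrlt y) htn,
    ← Nat.cast_le (α := ℝ)] at hcommon
  push_cast at hcommon
  have hxC := hx.min_le_card_nearest_inter (hrinj x) (hrlt x) htn hB
  rw [min_eq_left (mod_cast hthi)] at hxC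
  have hyC := hy.min_le_card_nearest_inter (hrinj y) (hrlt y) htn hB
  have hmin := lt_min htlo hCj
  have hnonneg : 0 ≤ (α + ν) * Fintype.card V := by positivity
  constructor <;> linarith

theorem weak_good_points_different_clusters_few_common_neighbors
    {V : Type*} [Fintype V] [DecidableEq V] {k : ℕ}
    (r : V → V → ℕ) (C : Fin k → Finset V) (α ν : ℝ) (B : Finset V)
    (hn : 0 < Fintype.card V)
    (hα : 0 ≤ α) (hν : 0 ≤ ν)
    (hrinj : ∀ x : V, Function.Injective (r x))
    (hrlt : ∀ x y : V, r x y < Fintype.card V)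
    (hdis : ∀ i j : Fin k, i ≠ j → Disjoint (C i) (C j))
    (hcov : ∀ x : V, ∃ i : Fin k, x ∈ C i)
    (hB : (B.card : ℝ) ≤ ν * (Fintype.card V))
    (i j : Fin k) (hij : j ≠ i)
    (hCj : 6 * (α + ν) * (Fintype.card V) < ((C j).card : ℝ))
    (t : ℕ) (htlo : 6 * (α + ν) * (Fintype.card V) < (t : ℝ))
    (hthi : t ≤ (C i).card) (htn : t ≤ Fintype.card V)
    (x : V) (hx : IsGoodPoint r α B (C i) x)
    (y : V) (hy : IsGoodPoint r α B (C j) y) :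
    (((nearest r x t) ∩ (nearest r y t)).card : ℝ)
        < (t : ℝ) - 4 * (α + ν) * (Fintype.card V) ∧
    (((nearest r x t) ∩ (nearest r y t)).card : ℝ)
        < (t : ℝ) - 2 * (α + ν) * (Fintype.card V) :=
  weak_good_points_different_clusters_few_common_neighbors_general r C α ν B hα hν hrinj hrlt hdis
    hB i j hij hCj t htlo hthi htn x hx y hy
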